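/- Let n be a natural number and let X, Y be n×n complex matrices that are normal (X*X = XX* and Y*Y = YY*). Then ‖|X| − |Y|‖₂ ≤ ‖X − Y‖₂. -/

import Mathlib

open Matrix
open scoped ComplexOrder

/-- Hilbert–Schmidt (Frobenius) norm: ‖X‖₂ = √(Re Tr(XᴴX)). -/
noncomputable def hsNorm {n : ℕ} (X : Matrix (Fin n) (Fin n) ℂ) : ℝ :=
  Real.sqrt ((Matrix.trace (Xᴴ * X)).re)

/-- Angle Θ(X,Y) = arccos(Re Tr(YᴴX) / (‖X‖₂‖Y‖₂)). -/
noncomputable def theta {n : ℕ} (X Y : Matrix (Fin n) (Fin n) ℂ) : ℝ :=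
  Real.arccos ((Matrix.trace (Yᴴ * X)).re / (hsNorm X * hsNorm Y))

/-- Square root of a positive semidefinite matrix (removed from Mathlib; old definition restored). -/
noncomputable def Matrix.PosSemidef.sqrt {n : Type*} [Fintype n] [DecidableEq n] {𝕜 : Type*} [RCLike 𝕜]
    {A : Matrix n n 𝕜} (hA : A.PosSemidef) : Matrix n n 𝕜 :=
  (hA.1.eigenvectorUnitary : Matrix n n 𝕜) * diagonal ((↑) ∘ (√·) ∘ hA.1.eigenvalues) *
    (star hA.1.eigenvectorUnitary : Matrix n n 𝕜)

/-- |X| : the positive semidefinite square root of XᴴX. -/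
noncomputable def matAbs {n : ℕ} (X : Matrix (Fin n) (Fin n) ℂ) : Matrix (Fin n) (Fin n) ℂ :=
  (Matrix.posSemidef_conjTranspose_mul_self X).sqrt

/-!
For normal `X` write `X = S R` with `R = |X|^{1/2}` and `S S* = |X|`, i.e. `S = U |X|^{1/2}` where
`X = U |X|` is a polar decomposition whose unitary commutes with `|X|`. Expanding traces, such
factorizations `X = S R`, `Y = T V` (with `T T* = |Y|`, `V = |Y|^{1/2}`) give the exact
identity `‖X - Y‖₂² = ‖|X| - |Y|‖₂² + ‖S* T - R V‖₂²`, from which the inequality is immediate.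
Instead of constructing `U`, one takes `R = f(X*X)` and `S = X g(X*X)` with `f t = t^{1/4}` and
`g t = t^{-1/4}` (the junk value `0⁻¹ = 0` gives `g 0 = 0`); normality is what makes `X` commute
with `g(X*X)`.
-/

namespace Matrix

variable {n 𝕜 : Type*} [Fintype n] [RCLike 𝕜]

structure IsHalfPolar (X P S R : Matrix n n 𝕜) : Prop where
  eq_mul : X = S * R
  isHermitian : R.IsHermitian
  mul_self : R * R = P
  mul_conjTranspose : S * Sᴴ = P
  mul_self_eq : P * P = Xᴴ * X

theorem IsHalfPolar.conjTranspose_eq {X P S R : Matrix n n 𝕜} (h : IsHalfPolar X P S R) :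
    Pᴴ = P := by
  rw [← h.mul_self, conjTranspose_mul, h.isHermitian.eq]

theorem IsHalfPolar.trace_conjTranspose_sub_mul_sub {X Y P Q S R T V : Matrix n n 𝕜}
    (hX : IsHalfPolar X P S R) (hY : IsHalfPolar Y Q T V) :
    trace ((X - Y)ᴴ * (X - Y)) =
      trace ((P - Q)ᴴ * (P - Q)) + trace ((Sᴴ * T - R * V)ᴴ * (Sᴴ * T - R * V)) := by
  have hR := hX.isHermitian.eq
  have hV := hY.isHermitian.eq
  have h1 : trace ((Sᴴ * T)ᴴ * (Sᴴ * T)) = trace (P * Q) := calc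
    _ = trace (Tᴴ * (S * Sᴴ) * T) := by
      rw [conjTranspose_mul, conjTranspose_conjTranspose]; simp only [mul_assoc]
    _ = trace (P * (T * Tᴴ)) := by rw [hX.mul_conjTranspose, trace_mul_cycle, trace_mul_comm]
    _ = trace (P * Q) := by rw [hY.mul_conjTranspose]
  have h2 : trace ((R * V)ᴴ * (R * V)) = trace (P * Q) := calc
    _ = trace (V * (R * R) * V) := by
      rw [conjTranspose_mul, hR, hV]; simp only [mul_assoc]
    _ = trace (P * (V * V)) := by rw [hX.mul_self, trace_mul_cycle, trace_mul_comm]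
    _ = trace (P * Q) := by rw [hY.mul_self]
  have h3 : trace ((Sᴴ * T)ᴴ * (R * V)) = trace (Yᴴ * X) := calc
    _ = trace (Tᴴ * S * R * V) := by
      rw [conjTranspose_mul, conjTranspose_conjTranspose]; simp only [mul_assoc]
    _ = trace (V * (Tᴴ * S * R)) := trace_mul_comm _ _
    _ = trace (Yᴴ * X) := by
      rw [hX.eq_mul, hY.eq_mul, conjTranspose_mul, hV]; simp only [mul_assoc]
  have h4 : trace ((R * V)ᴴ * (Sᴴ * T)) = trace (Xᴴ * Y) := calc
    _ = trace (V * (R * Sᴴ * T)) := by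
      rw [conjTranspose_mul, hR, hV]; simp only [mul_assoc]
    _ = trace (R * Sᴴ * T * V) := trace_mul_comm _ _
    _ = trace (Xᴴ * Y) := by
      rw [hX.eq_mul, hY.eq_mul, conjTranspose_mul, hR]; simp only [mul_assoc]
  have h5 : trace (Q * P) = trace (P * Q) := trace_mul_comm _ _
  simp only [conjTranspose_sub, sub_mul, mul_sub, trace_sub, hX.conjTranspose_eq,
    hY.conjTranspose_eq, hX.mul_self_eq, hY.mul_self_eq]
  linear_combination h3 + h4 + h5 - h1 - h2

variable [DecidableEq n]

theorem PosSemidef.sqrt_eq_cfc {A : Matrix n n 𝕜} (hA : A.PosSemidef) :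
    hA.sqrt = cfc Real.sqrt A := by
  rw [hA.1.cfc_eq]; rfl

theorem nonneg_of_mem_spectrum_conjTranspose_mul_self (X : Matrix n n 𝕜) {t : ℝ}
    (ht : t ∈ spectrum ℝ (Xᴴ * X)) : 0 ≤ t := by
  have hX := posSemidef_conjTranspose_mul_self X
  obtain ⟨i, rfl⟩ := hX.1.spectrum_real_eq_range_eigenvalues ▸ ht
  exact hX.eigenvalues_nonneg i

theorem continuousOn_spectrum (A : Matrix n n 𝕜) (f : ℝ → ℝ) :
    ContinuousOn f (spectrum ℝ A) :=
  A.finite_real_spectrum.continuousOn f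

theorem conjTranspose_cfc (A : Matrix n n 𝕜) (f : ℝ → ℝ) : (cfc f A)ᴴ = cfc f A :=
  (cfc_predicate f A : IsSelfAdjoint _).star_eq

theorem mul_cfc_conjTranspose_mul_self_eq_self (X : Matrix n n 𝕜) {f : ℝ → ℝ}
    (hf : ∀ t, 0 < t → f t = 1) : X * cfc f (Xᴴ * X) = X := by
  have hc := continuousOn_spectrum (Xᴴ * X)
  have hH : IsSelfAdjoint (Xᴴ * X) := (posSemidef_conjTranspose_mul_self X).1
  -- the Gram matrix of `X * (1 - f (Xᴴ * X))` is `((1 - f t) * t * (1 - f t)) (Xᴴ * X)`, which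
  -- vanishes because the spectrum of `Xᴴ * X` is nonnegative
  have hGH : (X * cfc (fun t => 1 - f t) (Xᴴ * X))ᴴ * (X * cfc (fun t => 1 - f t) (Xᴴ * X)) =
      0 := by
    rw [conjTranspose_mul, conjTranspose_cfc, mul_assoc, ← mul_assoc Xᴴ]
    nth_rewrite 2 [← cfc_id' ℝ (Xᴴ * X)]
    rw [← cfc_mul _ _ _ (hc _) (hc _), ← cfc_mul _ _ _ (hc _) (hc _),
      ← cfc_zero ℝ (Xᴴ * X)]
    refine cfc_congr fun t ht => ?_
    rcases (nonneg_of_mem_spectrum_conjTranspose_mul_self X ht).eq_or_lt with rfl | hpos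
    · simp
    · simp [hf t hpos]
  rw [conjTranspose_mul_self_eq_zero, cfc_sub _ _ _ (hc _) (hc _), cfc_const_one ℝ (Xᴴ * X),
    mul_sub, mul_one, sub_eq_zero] at hGH
  exact hGH.symm

theorem exists_isHalfPolar_of_normal {X : Matrix n n 𝕜} (hX : Xᴴ * X = X * Xᴴ) :
    ∃ S R, IsHalfPolar X (cfc Real.sqrt (Xᴴ * X)) S R := by
  have hc := continuousOn_spectrum (Xᴴ * X)
  have hH : IsSelfAdjoint (Xᴴ * X) := (posSemidef_conjTranspose_mul_self X).1
  have hXH : Commute (Xᴴ * X) X := by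
    rw [Commute, SemiconjBy, ← mul_assoc, ← hX]
  have hFX := (hXH.cfc_real fun t => (√(√t))⁻¹).eq
  refine ⟨X * cfc (fun t => (√(√t))⁻¹) (Xᴴ * X), cfc (fun t => √(√t)) (Xᴴ * X),
    ⟨?_, cfc_predicate _ _, ?_, ?_, ?_⟩⟩
  · rw [mul_assoc, ← cfc_mul _ _ _ (hc _) (hc _), mul_cfc_conjTranspose_mul_self_eq_self]
    intro t ht
    exact inv_mul_cancel₀ (by positivity)
  · rw [← cfc_mul _ _ _ (hc _) (hc _)]
    exact cfc_congr fun t _ => Real.mul_self_sqrt (Real.sqrt_nonneg t)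
  · rw [conjTranspose_mul, conjTranspose_cfc]
    calc _ = cfc (fun t => (√(√t))⁻¹) (Xᴴ * X) * cfc (fun t => (√(√t))⁻¹) (Xᴴ * X) *
          (Xᴴ * X) := by
          rw [← mul_assoc, ← hFX, mul_assoc _ X, ← hFX]; simp only [mul_assoc]; rw [← hX]
      _ = cfc Real.sqrt (Xᴴ * X) := by
          nth_rewrite 3 [← cfc_id' ℝ (Xᴴ * X)]
          rw [← cfc_mul _ _ _ (hc _) (hc _), ← cfc_mul _ _ _ (hc _) (hc _)]
          refine cfc_congr fun t _ => ?_
          rw [← mul_inv, Real.mul_self_sqrt (Real.sqrt_nonneg t), inv_mul_eq_div, Real.div_sqrt]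
  · nth_rewrite 3 [← cfc_id' ℝ (Xᴴ * X)]
    rw [← cfc_mul _ _ _ (hc _) (hc _)]
    exact cfc_congr fun t ht =>
      Real.mul_self_sqrt (nonneg_of_mem_spectrum_conjTranspose_mul_self X ht)

theorem re_trace_cfc_sqrt_sub_le {X Y : Matrix n n 𝕜}
    (hXn : Xᴴ * X = X * Xᴴ) (hYn : Yᴴ * Y = Y * Yᴴ) :
    RCLike.re (trace ((cfc Real.sqrt (Xᴴ * X) - cfc Real.sqrt (Yᴴ * Y))ᴴ *
      (cfc Real.sqrt (Xᴴ * X) - cfc Real.sqrt (Yᴴ * Y)))) ≤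
      RCLike.re (trace ((X - Y)ᴴ * (X - Y))) := by
  obtain ⟨S, R, hX⟩ := exists_isHalfPolar_of_normal hXn
  obtain ⟨T, V, hY⟩ := exists_isHalfPolar_of_normal hYn
  rw [hX.trace_conjTranspose_sub_mul_sub hY, map_add]
  exact le_add_of_nonneg_right
    (RCLike.nonneg_iff.mp (posSemidef_conjTranspose_mul_self (Sᴴ * T - R * V)).trace_nonneg).1

end Matrix

theorem stmt_15 {n : ℕ} (X Y : Matrix (Fin n) (Fin n) ℂ)
    (hXn : Xᴴ * X = X * Xᴴ) (hYn : Yᴴ * Y = Y * Yᴴ) :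
    hsNorm (matAbs X - matAbs Y) ≤ hsNorm (X - Y) := by
  rw [hsNorm, hsNorm, matAbs, matAbs, PosSemidef.sqrt_eq_cfc, PosSemidef.sqrt_eq_cfc]
  exact Real.sqrt_le_sqrt (re_trace_cfc_sqrt_sub_le hXn hYn)
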